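/- arXiv:1603.06957 — 3 statements merged into one kernel-verified Lean document; each statement's English description precedes it below -/
import Mathlib

section
/- For every integer n ≥ 1, the infinite product ∏_{k=1}^{∞}(1 - q^k) equals the sum ∑_{j=-∞}^{∞} (-1)^j q^{j(3j-1)/2} as formal power series in q (Euler's pentagonal number theorem), and hence their coefficients agree in every degree. -/
/-! Mathlib's `PowerSeries.coeff_prod_one_sub_X_pow_eventually_eq` identifies the degree-`d`
coefficient of all large enough finite products with that of `pentagonalSeries`; the truncation
at any `M ≥ d` already has it, since `1 - X ^ k ≡ 1 mod X ^ (d + 1)` for `k > d`. -/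

open Filter Finset PowerSeries

theorem abs_le_pentagonal (k : ℤ) : |k| ≤ pentagonal k := by
  have h := two_mul_natCast_pentagonal k
  rcases abs_cases k with ⟨hk, -⟩ | ⟨hk, -⟩ <;> rw [hk] <;> nlinarith

namespace PowerSeries

variable {R : Type*} [CommRing R]

theorem coeff_prod_Icc_one_sub_X_pow_of_le {d M : ℕ} (h : d ≤ M) :
    coeff d (∏ k ∈ Icc 1 M, (1 - X ^ k : R⟦X⟧)) = coeff d (∏ k ∈ Icc 1 d, (1 - X ^ k : R⟦X⟧)) := by
  induction M, h using Nat.le_induction with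
  | base => rfl
  | succ M hdM ih =>
    rw [← ih, ← Ico_add_one_right_eq_Icc, prod_Ico_succ_top (by omega), mul_sub, mul_one,
      map_sub, coeff_mul_X_pow', if_neg (by omega), sub_zero, Ico_add_one_right_eq_Icc]

theorem prod_range_one_sub_X_pow_succ (N : ℕ) :
    ∏ n ∈ range N, (1 - X ^ (n + 1) : R⟦X⟧) = ∏ k ∈ Icc 1 N, (1 - X ^ k : R⟦X⟧) := by
  rw [range_eq_Ico, prod_Ico_add' (fun k ↦ (1 - X ^ k : R⟦X⟧)), zero_add,
    Ico_add_one_right_eq_Icc]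

variable (R) in
theorem coeff_prod_Icc_one_sub_X_pow (d : ℕ) :
    coeff d (∏ k ∈ Icc 1 d, (1 - X ^ k : R⟦X⟧)) = coeff d (pentagonalSeries R) := by
  obtain ⟨N, hN, hdN⟩ := ((tendsto_finset_range.eventually
    (coeff_prod_one_sub_X_pow_eventually_eq R d)).and (eventually_ge_atTop d)).exists
  rw [← hN, prod_range_one_sub_X_pow_succ, coeff_prod_Icc_one_sub_X_pow_of_le hdN]

variable (R) in
theorem coeff_pentagonalSeries_eq_sum_Icc (n : ℕ) :
    coeff n (pentagonalSeries R) =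
      ∑ j ∈ Icc (-(n : ℤ)) n, if pentagonal j = n then (j.negOnePow : R) else 0 := by
  by_cases hn : n ∈ Set.range pentagonal
  · obtain ⟨k, rfl⟩ := hn
    have hk : k ∈ Icc (-(pentagonal k : ℤ)) (pentagonal k) :=
      mem_Icc.mpr (abs_le.mp (abs_le_pentagonal k))
    simp only [pentagonal_inj, sum_ite_eq', if_pos hk, coeff_pentagonalSeries_pentagonal]
  · rw [coeff_pentagonalSeries_eq_zero R hn, eq_comm]
    exact sum_eq_zero fun j _ ↦ if_neg fun hj ↦ hn ⟨j, hj⟩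

end PowerSeries

theorem pentagonal_number_theorem :
    (∀ d M : ℕ, d ≤ M →
      (PowerSeries.coeff (R := ℤ) d) (∏ k ∈ Finset.Icc 1 M, (1 - PowerSeries.X ^ k)) =
      (PowerSeries.coeff (R := ℤ) d) (∏ k ∈ Finset.Icc 1 d, (1 - PowerSeries.X ^ k))) ∧
    (∀ d : ℕ,
      (PowerSeries.coeff (R := ℤ) d) (∏ k ∈ Finset.Icc 1 d, (1 - PowerSeries.X ^ k)) =
      ∑ j ∈ Finset.Icc (-(d : ℤ)) (d : ℤ),
        if (j * (3 * j - 1)) / 2 = (d : ℤ) then (j.negOnePow : ℤ) else 0) := by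
  refine ⟨fun d M h ↦ coeff_prod_Icc_one_sub_X_pow_of_le h, fun d ↦ ?_⟩
  rw [coeff_prod_Icc_one_sub_X_pow, coeff_pentagonalSeries_eq_sum_Icc]
  simp only [← natCast_pentagonal, Nat.cast_inj, Int.cast_id]
end

section
/- Let f, g, h be formal Laurent series over ℤ with h a unit (invertible) and f = g / h. If g' and h' are Laurent series agreeing with g and h respectively in all coefficients of the top n degrees (after normalizing leading degrees), with h' also a unit, then g'/h' agrees with f in its top n coefficients. Equivalently: if g ≡ g' and h ≡ h' modulo terms of degree at most (top degree − n), and the leading coefficients of h, h' are units, then g/h ≡ g'/h' modulo terms of degree at most (top degree of f − n). -/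
/- Agreement in the first `n` coefficients is congruence modulo `X ^ n`, and congruences
modulo any element are compatible with division by units:
`g / h - g' / h' = ((g - g') * h' - g' * (h - h')) / (h * h')`. -/

theorem dvd_mul_inverse_sub_mul_inverse {R : Type*} [CommRing R] {d g g' h h' : R}
    (hu : IsUnit h) (hu' : IsUnit h') (hg : d ∣ g - g') (hh : d ∣ h - h') :
    d ∣ g * Ring.inverse h - g' * Ring.inverse h' := by
  obtain ⟨u, rfl⟩ := hu
  obtain ⟨v, rfl⟩ := hu'
  have hdiff : g * Ring.inverse (u : R) - g' * Ring.inverse (v : R)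
      = ↑u⁻¹ * ↑v⁻¹ * ((g - g') * v - g' * (u - v)) := by
    rw [Ring.inverse_unit, Ring.inverse_unit]
    linear_combination (-(g * ↑u⁻¹)) * v.inv_mul + (g' * ↑v⁻¹) * u.inv_mul
  rw [hdiff]
  exact (dvd_sub (hg.mul_right _) (hh.mul_left _)).mul_left _

namespace PowerSeries

theorem X_pow_dvd_sub_iff {R : Type*} [Ring R] {n : ℕ} {φ ψ : PowerSeries R} :
    X ^ n ∣ φ - ψ ↔ ∀ m < n, coeff m φ = coeff m ψ := by
  simp only [X_pow_dvd_iff, map_sub, sub_eq_zero]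

end PowerSeries

theorem truncation_compatible_with_division (n : ℕ) (f g g' h h' : PowerSeries ℤ)
    (hu : IsUnit h) (hu' : IsUnit h')
    (hf : f * h = g)
    (hg : ∀ k < n, PowerSeries.coeff k g = PowerSeries.coeff k g')
    (hh : ∀ k < n, PowerSeries.coeff k h = PowerSeries.coeff k h') :
    ∀ k < n, PowerSeries.coeff k f = PowerSeries.coeff k (g' * Ring.inverse h') := by
  have hf_eq : f = g * Ring.inverse h := by
    rw [← hf, mul_assoc, Ring.mul_inverse_cancel _ hu, mul_one]
  rw [← PowerSeries.X_pow_dvd_sub_iff, hf_eq]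
  exact dvd_mul_inverse_sub_mul_inverse hu hu'
    (PowerSeries.X_pow_dvd_sub_iff.2 hg) (PowerSeries.X_pow_dvd_sub_iff.2 hh)
end

section
/- Define the quantum integer {n} = A^{2n} − A^{−2n} in ℤ[A, A^{−1}] and the quantum factorial {n}! = {n}{n−1}⋯{1}. Then for every N ≥ 1, the Laurent polynomial {2N}! agrees with (−1)^N A^{−(3N²+N)} {N}! · (1 − ∑_{i=1}^{N} A^{4(N+i)}) in all coefficients of the 4(2N+1) lowest A-degrees; equivalently, writing q = A^{−4}, {2N}! agrees with (−1)^N q^{(3N²+N)/4} {N}! (1 − (q^{−N−1} − q^{−2N−1})/(1 − q^{−1})) in the 2N+1 highest q-degree coefficients. -/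
/- Quantum integers and factorials as Laurent polynomials in A, regarded inside the
ring of formal Laurent series in A (so that coefficients can be extracted):
{n} = A^{2n} - A^{-2n}, {n}! = {n}{n-1}⋯{1}. -/

/-- The monomial A^d. -/
noncomputable def Amon (d : ℤ) : LaurentSeries ℤ := HahnSeries.single d 1

/-- The quantum integer {n} = A^{2n} - A^{-2n}. -/
noncomputable def qInt (n : ℕ) : LaurentSeries ℤ := Amon (2 * n) - Amon (-(2 * n))

/-- The quantum factorial {n}! = ∏_{k=1}^{n} {k}. -/
noncomputable def qFac (n : ℕ) : LaurentSeries ℤ := ∏ k ∈ Finset.Icc 1 n, qInt k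

/-! Writing {k} = A^{-2k} (A^{4k} - 1), the factorial {2N}! is A^{-2N(2N+1)} times the polynomial
∏_{k ≤ 2N} (X^k - 1) evaluated at X = A^4. Its factor ∏_{k=N+1}^{2N} (X^k - 1) is congruent to
(-1)^N (1 - ∑_{k=N+1}^{2N} X^k) modulo X^{2N+2}, since any product of two or more of the X^k
with k > N has degree at least 2N+2; and a congruence modulo X^m between polynomials in A^4 is
an agreement of the coefficients in the 4m lowest A-degrees. -/

open Polynomial Finset

lemma Amon_add (a b : ℤ) : Amon (a + b) = Amon a * Amon b := by
  simp [Amon, HahnSeries.single_mul_single]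

lemma Amon_pow (a : ℤ) (n : ℕ) : Amon a ^ n = Amon (n * a) := by
  simp [Amon, HahnSeries.single_pow]

lemma Amon_sum {ι : Type*} (s : Finset ι) (f : ι → ℤ) :
    Amon (∑ i ∈ s, f i) = ∏ i ∈ s, Amon (f i) := by
  induction s using Finset.cons_induction with
  | empty => rfl
  | cons i s hi ih => rw [sum_cons, prod_cons, Amon_add, ih]

lemma aeval_Amon_X_pow (a : ℤ) (n : ℕ) : aeval (Amon a) ((X : ℤ[X]) ^ n) = Amon (n * a) := by
  rw [map_pow, aeval_X, Amon_pow]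

lemma coeff_aeval_Amon_of_neg {a : ℕ} (p : ℤ[X]) {d : ℤ} (hd : d < 0) :
    (aeval (Amon a) p).coeff d = 0 := by
  induction p using Polynomial.induction_on' with
  | add p q hp hq => rw [map_add, HahnSeries.coeff_add, hp, hq, add_zero]
  | monomial n c =>
    rw [aeval_monomial, Amon_pow, eq_intCast, ← map_intCast HahnSeries.C, Int.cast_id,
      HahnSeries.C_apply, Amon, HahnSeries.single_mul_single, mul_one,
      HahnSeries.coeff_single_of_ne]
    exact (hd.trans_le (by positivity)).ne

lemma coeff_Amon_mul_aeval_eq_of_X_pow_dvd_sub {a : ℕ} {P Q : ℤ[X]} {m : ℕ}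
    (h : X ^ m ∣ P - Q) (e : ℤ) {d : ℤ} (hd : d < e + m * a) :
    (Amon e * aeval (Amon a) P).coeff d = (Amon e * aeval (Amon a) Q).coeff d := by
  obtain ⟨r, hr⟩ := h
  rw [← sub_eq_zero, ← HahnSeries.coeff_sub, ← mul_sub, ← map_sub, hr, map_mul,
    aeval_Amon_X_pow, ← mul_assoc, ← Amon_add, show d = d - (e + m * a) + (e + m * a) by ring,
    Amon, HahnSeries.coeff_single_mul_add, one_mul]
  exact coeff_aeval_Amon_of_neg r (by linarith)

lemma qInt_eq (k : ℕ) : qInt k = Amon (-(2 * k)) * aeval (Amon 4) ((X : ℤ[X]) ^ k - 1) := by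
  rw [map_sub, aeval_Amon_X_pow, map_one, mul_sub, mul_one, ← Amon_add, qInt]
  ring_nf

lemma prod_qInt_eq {ι : Type*} (s : Finset ι) (f : ι → ℕ) :
    ∏ i ∈ s, qInt (f i) =
      Amon (-∑ i ∈ s, 2 * (f i : ℤ)) * aeval (Amon 4) (∏ i ∈ s, ((X : ℤ[X]) ^ f i - 1)) := by
  simp only [qInt_eq, prod_mul_distrib, map_prod, ← sum_neg_distrib, Amon_sum]

lemma sum_Icc_two_mul (n : ℕ) : ∑ k ∈ Icc 1 n, 2 * (k : ℤ) = n * (n + 1) := by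
  induction n with
  | zero => simp
  | succ n ih =>
    rw [sum_Icc_succ_top (by omega), ih]
    push_cast
    ring

lemma qFac_eq (n : ℕ) :
    qFac n = Amon (-(n * (n + 1))) * aeval (Amon 4) (∏ k ∈ Icc 1 n, ((X : ℤ[X]) ^ k - 1)) := by
  rw [qFac, ← sum_Icc_two_mul]
  exact prod_qInt_eq (Icc 1 n) id

lemma prod_Icc_one_two_mul {M : Type*} [CommMonoid M] (f : ℕ → M) (n : ℕ) :
    ∏ k ∈ Icc 1 (2 * n), f k = (∏ k ∈ Icc 1 n, f k) * ∏ i ∈ Icc 1 n, f (n + i) := by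
  have hshift : ∏ i ∈ Icc 1 n, f (n + i) = ∏ k ∈ Ioc n (2 * n), f k := by
    rw [← Icc_add_one_left_eq_Ioc, two_mul, ← map_add_left_Icc, prod_map]
    rfl
  rw [hshift, ← zero_add 1, Icc_add_one_left_eq_Ioc, Icc_add_one_left_eq_Ioc,
    prod_Ioc_consecutive _ (Nat.zero_le n) (by omega)]

lemma X_pow_two_mul_dvd_prod_X_pow_sub_one_sub {R ι : Type*} [CommRing R] (s : Finset ι)
    (f : ι → ℕ) {t : ℕ} (hs : ∀ i ∈ s, t ≤ f i) :
    (X : R[X]) ^ (2 * t) ∣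
      ∏ i ∈ s, ((X : R[X]) ^ f i - 1) - (-1) ^ #s * (1 - ∑ i ∈ s, (X : R[X]) ^ f i) := by
  induction s using Finset.cons_induction with
  | empty => simp
  | cons a s ha ih =>
    have hs' : ∀ i ∈ s, t ≤ f i := fun i hi => hs i (mem_cons_of_mem hi)
    obtain ⟨r, hr⟩ := ih hs'
    obtain ⟨u, hu⟩ : (X : R[X]) ^ (2 * t) ∣ X ^ f a * ∑ i ∈ s, (X : R[X]) ^ f i := by
      rw [mul_sum]
      refine dvd_sum fun i hi => ?_
      rw [← pow_add]
      exact pow_dvd_pow X (by have := hs a (mem_cons_self a s); have := hs' i hi; omega)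
    refine ⟨(X ^ f a - 1) * r - (-1) ^ #s * u, ?_⟩
    rw [prod_cons, sum_cons, card_cons]
    linear_combination (X ^ f a - 1 : R[X]) * hr - (-1 : R[X]) ^ #s * hu

lemma sum_Icc_two_mul_add (n : ℕ) : ∑ i ∈ Icc 1 n, 2 * ((n + i : ℕ) : ℤ) = 3 * n ^ 2 + n := by
  simp only [Nat.cast_add, mul_add, sum_add_distrib, sum_Icc_two_mul, sum_const, Nat.card_Icc,
    nsmul_eq_mul]
  push_cast
  ring

/- Both sides have lowest A-degree -2N(2N+1), so agreeing in the 4(2N+1) lowest A-degrees means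
agreeing in every degree below -2N(2N+1) + 4(2N+1). -/
theorem qFac_two_mul_truncation_general (N : ℕ) :
    ∀ d : ℤ, d < -(2 * (N : ℤ) * (2 * N + 1)) + 4 * (2 * (N : ℤ) + 1) →
      (qFac (2 * N)).coeff d =
      ((-1) ^ N * Amon (-(3 * (N : ℤ) ^ 2 + N)) * qFac N *
        (1 - ∑ i ∈ Finset.Icc 1 N, Amon (4 * ((N : ℤ) + i)))).coeff d := by
  intro d hd
  set P : ℤ[X] := ∏ k ∈ Icc 1 N, (X ^ k - 1)
  set T : ℤ[X] := ∏ i ∈ Icc 1 N, (X ^ (N + i) - 1)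
  set S : ℤ[X] := ∑ i ∈ Icc 1 N, X ^ (N + i)
  have hexp : -((N : ℤ) * (N + 1)) + -(3 * (N : ℤ) ^ 2 + N) = -(2 * (N : ℤ) * (2 * N + 1)) := by
    ring
  have hlhs : qFac (2 * N) = Amon (-(2 * (N : ℤ) * (2 * N + 1))) * aeval (Amon 4) (P * T) := by
    rw [qFac, prod_Icc_one_two_mul, ← qFac, qFac_eq, prod_qInt_eq, sum_Icc_two_mul_add, ← hexp,
      Amon_add, map_mul]
    ring
  have hS : aeval (Amon 4) (1 - S) = 1 - ∑ i ∈ Icc 1 N, Amon (4 * ((N : ℤ) + i)) := by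
    simp only [S, map_sub, map_one, map_sum, aeval_Amon_X_pow]
    push_cast
    simp only [mul_comm]
  have hrhs : (-1) ^ N * Amon (-(3 * (N : ℤ) ^ 2 + N)) * qFac N *
      (1 - ∑ i ∈ Icc 1 N, Amon (4 * ((N : ℤ) + i))) =
      Amon (-(2 * (N : ℤ) * (2 * N + 1))) * aeval (Amon 4) (P * ((-1) ^ N * (1 - S))) := by
    rw [qFac_eq, ← hS, ← hexp, Amon_add, map_mul, map_mul, map_pow, map_neg, map_one]
    ring
  have hdvd : X ^ (2 * (N + 1)) ∣ P * T - P * ((-1) ^ N * (1 - S)) := by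
    have hT := X_pow_two_mul_dvd_prod_X_pow_sub_one_sub (R := ℤ) (Icc 1 N) (N + ·)
      (t := N + 1) (fun i hi => by simp only [mem_Icc] at hi; omega)
    rw [Nat.card_Icc, Nat.add_sub_cancel] at hT
    rw [← mul_sub]
    exact hT.mul_left P
  rw [hlhs, hrhs]
  exact coeff_Amon_mul_aeval_eq_of_X_pow_dvd_sub hdvd _ (by push_cast; linarith)

theorem qFac_two_mul_truncation (N : ℕ) (hN : 1 ≤ N) :
    ∀ d : ℤ, d < -(2 * (N : ℤ) * (2 * N + 1)) + 4 * (2 * (N : ℤ) + 1) →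
      (qFac (2 * N)).coeff d =
      ((-1) ^ N * Amon (-(3 * (N : ℤ) ^ 2 + N)) * qFac N *
        (1 - ∑ i ∈ Finset.Icc 1 N, Amon (4 * ((N : ℤ) + i)))).coeff d :=
  qFac_two_mul_truncation_general N
end
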